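/- Let Q be a minimal conjunctive query and 𝒱 a finite set of views. The following are equivalent: (a) Q is 𝒱-rewritable; (b) there is a cover partition for Q over 𝒱; (c) there is a consistent cover partition for Q over 𝒱. Moreover, if 𝒞 is a consistent cover partition for Q over 𝒱, then the induced query Q_𝒞 is a 𝒱-rewriting of Q. -/

import Mathlib

/-- A relational atom (or fact): a relation symbol with a list of arguments.
Arguments are natural numbers, serving both as variables and as data values. -/
structure Atom where
  rel : ℕ
  args : List ℕ
deriving DecidableEq

/-- Apply a substitution to an atom. -/
def mapAtom (f : ℕ → ℕ) (A : Atom) : Atom := ⟨A.rel, A.args.map f⟩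

/-- The variables of an atom. -/
def Atom.vars (A : Atom) : Finset ℕ := A.args.toFinset

/-- The variables of a finite set of atoms. -/
def varsOf (B : Finset Atom) : Finset ℕ := B.biUnion Atom.vars

/-- A conjunctive query: a head atom and a finite set of body atoms. -/
structure CQ where
  head : Atom
  body : Finset Atom
deriving DecidableEq

/-- All variables of a conjunctive query. -/
def CQ.vars (Q : CQ) : Finset ℕ := Q.head.vars ∪ varsOf Q.body

/-- A schema: a set of relation symbols together with an arity function. -/
structure Schema where
  rels : Set ℕ
  ar : ℕ → ℕ

/-- An atom (or fact) over a schema. -/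
def atomOver (σ : Schema) (A : Atom) : Prop :=
  A.rel ∈ σ.rels ∧ A.args.length = σ.ar A.rel

/-- `Q` is a (well-formed) conjunctive query over schema `σ`:
nonempty body of σ-atoms, head relation symbol not in σ, and safety. -/
def isCQ (σ : Schema) (Q : CQ) : Prop :=
  Q.body.Nonempty ∧ (∀ A ∈ Q.body, atomOver σ A) ∧
  Q.head.rel ∉ σ.rels ∧ Q.head.vars ⊆ varsOf Q.body

/-- A database is a set of facts (finiteness is imposed where needed). -/
abbrev Database := Set Atom

/-- A database over a schema. -/
def isDBOver (σ : Schema) (D : Database) : Prop := ∀ F ∈ D, atomOver σ F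

/-- The result of a conjunctive query on a database. -/
def evalCQ (Q : CQ) (D : Database) : Set Atom :=
  { F | ∃ ν : ℕ → ℕ, (∀ A ∈ Q.body, mapAtom ν A ∈ D) ∧ mapAtom ν Q.head = F }

/-- Containment of conjunctive queries. -/
def containedCQ (Q1 Q2 : CQ) : Prop :=
  ∀ D : Database, D.Finite → evalCQ Q1 D ⊆ evalCQ Q2 D

/-- Equivalence of conjunctive queries. -/
def equivCQ (Q1 Q2 : CQ) : Prop :=
  ∀ D : Database, D.Finite → evalCQ Q1 D = evalCQ Q2 D

/-- A conjunctive query is minimal if no equivalent CQ has strictly fewer body atoms. -/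
def isMinimal (Q : CQ) : Prop :=
  ∀ Q2 : CQ, equivCQ Q Q2 → Q.body.card ≤ Q2.body.card

/-- A homomorphism from `Q2` to `Q1`. -/
def isHom (h : ℕ → ℕ) (Q2 Q1 : CQ) : Prop :=
  (∀ A ∈ Q2.body, mapAtom h A ∈ Q1.body) ∧ mapAtom h Q2.head = Q1.head

/-- A body homomorphism from `Q2` to `Q1`. -/
def isBodyHom (h : ℕ → ℕ) (Q2 Q1 : CQ) : Prop :=
  ∀ A ∈ Q2.body, mapAtom h A ∈ Q1.body

/-- A set of views over σ: each view is a CQ over σ and views have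
pairwise distinct head relation symbols. -/
def isViewSet (σ : Schema) (𝒱 : Finset CQ) : Prop :=
  (∀ V ∈ 𝒱, isCQ σ V) ∧
  ∀ V ∈ 𝒱, ∀ W ∈ 𝒱, V ≠ W → V.head.rel ≠ W.head.rel

/-- The 𝒱-defined database 𝒱(D). -/
def viewDB (𝒱 : Finset CQ) (D : Database) : Database :=
  ⋃ V ∈ 𝒱, evalCQ V D

/-- `Q'` is a CQ over the schema σ_𝒱 of the head relations of the views 𝒱. -/
def overViews (𝒱 : Finset CQ) (Q' : CQ) : Prop :=
  Q'.body.Nonempty ∧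
  (∀ A ∈ Q'.body, ∃ V ∈ 𝒱, A.rel = V.head.rel ∧ A.args.length = V.head.args.length) ∧
  (∀ V ∈ 𝒱, Q'.head.rel ≠ V.head.rel) ∧
  Q'.head.vars ⊆ varsOf Q'.body

/-- `Q'` is a 𝒱-rewriting of `Q`: `Q'` is over σ_𝒱 and `Q'(𝒱(D)) = Q(D)`
for every (finite) database `D` over σ. -/
def isRewriting (σ : Schema) (𝒱 : Finset CQ) (Q Q' : CQ) : Prop :=
  overViews 𝒱 Q' ∧
  ∀ D : Database, D.Finite → isDBOver σ D →
    evalCQ Q' (viewDB 𝒱 D) = evalCQ Q D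

/-- `T` is a join tree for the atom set `B`. -/
def joinTreeProp (B : Finset Atom) (T : SimpleGraph {A : Atom // A ∈ B}) : Prop :=
  T.IsTree ∧
  ∀ (x : ℕ) (A A' : {A : Atom // A ∈ B}) (p : T.Walk A A'), p.IsPath →
    x ∈ A.1.vars → x ∈ A'.1.vars → ∀ C ∈ p.support, x ∈ C.1.vars

/-- The atom set `B` has a join tree. -/
def hasJoinTree (B : Finset Atom) : Prop :=
  ∃ T : SimpleGraph {A : Atom // A ∈ B}, joinTreeProp B T

/-- A conjunctive query is acyclic if its body has a join tree. -/
def isAcyclicCQ (Q : CQ) : Prop := hasJoinTree Q.body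

/-- A conjunctive query is free-connex acyclic. -/
def isFreeConnex (Q : CQ) : Prop :=
  isAcyclicCQ Q ∧ hasJoinTree (insert Q.head Q.body)

/-- The bridge variables of `𝒜 ⊆ body(Q)`. -/
def bvars (Q : CQ) (𝒜 : Finset Atom) : Finset ℕ :=
  varsOf 𝒜 ∩ (Q.head.vars ∪ varsOf (Q.body \ 𝒜))

/-- An application of a view `V`: a substitution that does not unify any
quantified variable of `V` with another variable of `V`. -/
def isApplication (V : CQ) (α : ℕ → ℕ) : Prop :=
  ∀ x ∈ varsOf V.body, x ∉ V.head.vars →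
    ∀ y ∈ CQ.vars V, y ≠ x → α x ≠ α y

/-- The query α(V). -/
def applyCQ (α : ℕ → ℕ) (V : CQ) : CQ :=
  ⟨mapAtom α V.head, V.body.image (mapAtom α)⟩

/-- `(𝒜, V, α, ψ)` is a cover description for `Q`. -/
def isCoverDesc (Q : CQ) (𝒜 : Finset Atom) (V : CQ) (α ψ : ℕ → ℕ) : Prop :=
  𝒜 ⊆ Q.body ∧ isApplication V α ∧
  𝒜 ⊆ V.body.image (mapAtom α) ∧
  bvars Q 𝒜 ⊆ V.head.vars.image α ∧
  isBodyHom ψ (applyCQ α V) Q ∧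
  ∀ x ∈ varsOf 𝒜, ψ x = x

/-- A cover partition for `Q` over `𝒱`: a collection of cover descriptions
whose atom sets partition `body(Q)`. -/
def isCoverPartition (Q : CQ) (𝒱 : Finset CQ) (m : ℕ)
    (𝒜 : Fin m → Finset Atom) (V : Fin m → CQ) (α ψ : Fin m → ℕ → ℕ) : Prop :=
  (∀ i, V i ∈ 𝒱 ∧ isCoverDesc Q (𝒜 i) (V i) (α i) (ψ i)) ∧
  ∀ A ∈ Q.body, ∃! i, A ∈ 𝒜 i

/-- Consistency of a cover partition: a variable of any `α_j(V_j)` lies in the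
range of another `α_i` only if it also lies in `bvars(𝒜_j)`. -/
def isConsistent (Q : CQ) (m : ℕ) (𝒜 : Fin m → Finset Atom) (V : Fin m → CQ)
    (α : Fin m → ℕ → ℕ) : Prop :=
  ∀ i j : Fin m, i ≠ j → ∀ z ∈ CQ.vars (applyCQ (α j) (V j)),
    (∃ x ∈ CQ.vars (V i), α i x = z) → z ∈ bvars Q (𝒜 j)

/-- The query `Q_𝒞` induced by a (consistent) cover partition. -/
def inducedCQ (Q : CQ) (m : ℕ) (V : Fin m → CQ) (α : Fin m → ℕ → ℕ) : CQ :=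
  ⟨Q.head, Finset.image (fun i => mapAtom (α i) (V i).head) Finset.univ⟩

/-- Quantified variable disjointness for a family of view applications. -/
def QVD (m : ℕ) (V : Fin m → CQ) (α : Fin m → ℕ → ℕ) : Prop :=
  ∀ i j : Fin m, i ≠ j → ∀ x ∈ varsOf (V i).body, x ∉ (V i).head.vars →
    ∀ y ∈ CQ.vars (V j), α i x ≠ α j y

/-- `QE` is an expansion of `Q'` with respect to the views `𝒱`. -/
def isExpansion (𝒱 : Finset CQ) (Q' QE : CQ) : Prop :=
  ∃ (m : ℕ) (A' : Fin m → Atom) (V : Fin m → CQ) (α : Fin m → ℕ → ℕ),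
    (∀ i, V i ∈ 𝒱 ∧ isApplication (V i) (α i) ∧ A' i = mapAtom (α i) (V i).head) ∧
    Q'.body = Finset.image A' Finset.univ ∧
    QVD m V α ∧
    QE.head = Q'.head ∧
    QE.body = Finset.biUnion Finset.univ (fun i => (V i).body.image (mapAtom (α i)))

/-- `atoms(x)`: the body atoms of `Q` containing the variable `x`. -/
def atomsWith (Q : CQ) (x : ℕ) : Finset Atom :=
  Q.body.filter (fun A => x ∈ A.vars)

/-- Hierarchical conjunctive queries. -/
def isHierarchical (Q : CQ) : Prop :=
  ∀ x y : ℕ, atomsWith Q x ⊆ atomsWith Q y ∨ atomsWith Q y ⊆ atomsWith Q x ∨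
    atomsWith Q x ∩ atomsWith Q y = ∅

/-- q-hierarchical conjunctive queries. -/
def isQHierarchical (Q : CQ) : Prop :=
  isHierarchical Q ∧ ∀ x y : ℕ, atomsWith Q x ⊂ atomsWith Q y →
    x ∈ Q.head.vars → y ∈ Q.head.vars

/-- `P` is a partition of `body(Q)` witnessing weak head arity at most `k`. -/
def witnessesWHA (Q : CQ) (k n : ℕ) (P : Fin n → Finset Atom) : Prop :=
  (∀ i, (P i).Nonempty) ∧ (∀ i, P i ⊆ Q.body) ∧ (∀ A ∈ Q.body, ∃! i, A ∈ P i) ∧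
  (∀ i, (varsOf (P i) ∩ Q.head.vars).card ≤ k) ∧
  (∀ i j, i ≠ j → ∀ x ∈ varsOf (P i), x ∈ varsOf (P j) → x ∈ Q.head.vars)

/-- `Q` has weak head arity at most `k`. -/
def hasWHAle (Q : CQ) (k : ℕ) : Prop := ∃ n P, witnessesWHA Q k n P

/-- The weak head arity of `Q`. -/
noncomputable def weakHeadArity (Q : CQ) : ℕ := sInf {k | hasWHAle Q k}

/-- The cover graph of `Q`: vertices are the body atoms, with an edge between
two atoms iff they share a variable not occurring in the head. -/
def coverGraph (Q : CQ) : SimpleGraph {A : Atom // A ∈ Q.body} :=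
  SimpleGraph.fromRel (fun A B => ∃ x, x ∈ A.1.vars ∧ x ∈ B.1.vars ∧ x ∉ Q.head.vars)

/-- A subset `s` of the atom set `B` is connected in the (join) tree `T`. -/
def connectedIn (B : Finset Atom) (T : SimpleGraph {A : Atom // A ∈ B}) (s : Finset Atom) : Prop :=
  (T.induce {A : {A : Atom // A ∈ B} | A.1 ∈ s}).Connected

/-! A consistent cover partition `𝒞` gives the rewriting `Q_𝒞`. A valuation of `Q_𝒞` over `𝒱(D)`
yields valuations of the views; since an application never identifies a quantified variable and
distinct blocks `𝒜ᵢ` share only bridge variables, these glue into a valuation of `Q`. Conversely a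
valuation `ν` of `Q` induces the valuations `ν ∘ ψᵢ` on the `αᵢ(Vᵢ)`, which agree where they
overlap by consistency. Every cover partition becomes consistent once each `αᵢ` renames the
variables outside `vars(𝒜ᵢ)` to fresh ones tagged by `i`.

Given a rewriting `Q'`, evaluating it on the canonical database of `Q` and renaming the
quantified variables of the views apart yields an expansion `E` with homomorphisms `Q → E → Q`.
By minimality their composite permutes `vars(Q)`, so a power of it is the identity and `Q` has a
section `φ : Q → E`. Grouping the atoms `A` of `Q` by a view whose part of `E` contains `φ(A)`
gives a cover partition. -/

open Finset

lemma Atom.mem_vars {A : Atom} {x : ℕ} : x ∈ A.vars ↔ x ∈ A.args := List.mem_toFinset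

lemma Atom.vars_mapAtom (f : ℕ → ℕ) (A : Atom) : (mapAtom f A).vars = A.vars.image f := by
  ext x
  simp [Atom.vars, mapAtom, eq_comm]

lemma mapAtom_mapAtom (f g : ℕ → ℕ) (A : Atom) : mapAtom f (mapAtom g A) = mapAtom (f ∘ g) A := by
  simp [mapAtom]

@[simp]
lemma mapAtom_id (A : Atom) : mapAtom id A = A := by simp [mapAtom]

lemma mapAtom_congr {f g : ℕ → ℕ} {A : Atom} (h : ∀ x ∈ A.vars, f x = g x) :
    mapAtom f A = mapAtom g A := by
  simp only [mapAtom, Atom.mk.injEq, true_and]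
  exact List.map_congr_left fun x hx => h x (Atom.mem_vars.mpr hx)

lemma mapAtom_eq_self {f : ℕ → ℕ} {A : Atom} (h : ∀ x ∈ A.vars, f x = x) : mapAtom f A = A :=
  (mapAtom_congr h).trans (mapAtom_id A)

lemma eq_of_mapAtom_eq {f g : ℕ → ℕ} {A : Atom} (h : mapAtom f A = mapAtom g A) :
    ∀ x ∈ A.vars, f x = g x := fun x hx =>
  List.map_inj_left.mp (congrArg Atom.args h) x (Atom.mem_vars.mp hx)

lemma exists_mem_vars_of_mapAtom_eq {A B : Atom} {f g : ℕ → ℕ} (h : mapAtom f A = mapAtom g B)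
    {x : ℕ} (hx : x ∈ A.vars) : ∃ y ∈ B.vars, f x = g y := by
  have hx' : f x ∈ (mapAtom f A).vars := by
    rw [Atom.vars_mapAtom]; exact mem_image_of_mem f hx
  rw [h, Atom.vars_mapAtom] at hx'
  obtain ⟨y, hy, hyx⟩ := mem_image.mp hx'
  exact ⟨y, hy, hyx.symm⟩

lemma mem_varsOf {B : Finset Atom} {x : ℕ} : x ∈ varsOf B ↔ ∃ A ∈ B, x ∈ A.vars :=
  mem_biUnion

lemma vars_subset_varsOf {B : Finset Atom} {A : Atom} (hA : A ∈ B) : A.vars ⊆ varsOf B :=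
  fun _ hx => mem_varsOf.mpr ⟨A, hA, hx⟩

lemma varsOf_mono {B B' : Finset Atom} (h : B ⊆ B') : varsOf B ⊆ varsOf B' :=
  biUnion_subset_biUnion_of_subset_left _ h

lemma varsOf_image (f : ℕ → ℕ) (B : Finset Atom) :
    varsOf (B.image (mapAtom f)) = (varsOf B).image f := by
  simp only [varsOf, image_biUnion, biUnion_image, Atom.vars_mapAtom]

lemma CQ.vars_applyCQ (f : ℕ → ℕ) (P : CQ) : (applyCQ f P).vars = P.vars.image f := by
  simp only [CQ.vars, applyCQ, Atom.vars_mapAtom, varsOf_image, image_union]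

lemma atomOver_mapAtom {σ : Schema} {A : Atom} (h : atomOver σ A) (f : ℕ → ℕ) :
    atomOver σ (mapAtom f A) :=
  ⟨h.1, (List.length_map f).trans h.2⟩

lemma evalCQ_mono (P : CQ) {D D' : Database} (h : D ⊆ D') : evalCQ P D ⊆ evalCQ P D' := by
  rintro F ⟨ν, hb, hh⟩
  exact ⟨ν, fun A hA => h (hb A hA), hh⟩

lemma mapAtom_head_mem_evalCQ {P : CQ} {D : Database} {ν : ℕ → ℕ}
    (h : ∀ A ∈ P.body, mapAtom ν A ∈ D) : mapAtom ν P.head ∈ evalCQ P D :=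
  ⟨ν, h, rfl⟩

lemma head_mem_evalCQ_body (P : CQ) : P.head ∈ evalCQ P ↑P.body :=
  ⟨id, fun A hA => by simpa using hA, mapAtom_id _⟩

lemma mem_viewDB {𝒱 : Finset CQ} {D : Database} {F : Atom} :
    F ∈ viewDB 𝒱 D ↔ ∃ V ∈ 𝒱, F ∈ evalCQ V D := by
  simp [viewDB]

lemma mem_evalCQ_of_mapAtom_head_mem_viewDB {σ : Schema} {𝒱 : Finset CQ} (h𝒱 : isViewSet σ 𝒱)
    {V : CQ} (hV : V ∈ 𝒱) {D : Database} {f : ℕ → ℕ} (h : mapAtom f V.head ∈ viewDB 𝒱 D) :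
    mapAtom f V.head ∈ evalCQ V D := by
  obtain ⟨W, hW, μ, hμ, hμh⟩ := mem_viewDB.mp h
  obtain rfl : W = V := by
    by_contra hne
    exact h𝒱.2 W hW V hV hne (congrArg Atom.rel hμh :)
  exact ⟨μ, hμ, hμh⟩

lemma isHom.comp {f g : ℕ → ℕ} {Q₁ Q₂ Q₃ : CQ} (hf : isHom f Q₂ Q₁) (hg : isHom g Q₃ Q₂) :
    isHom (f ∘ g) Q₃ Q₁ :=
  ⟨fun A hA => mapAtom_mapAtom f g A ▸ hf.1 _ (hg.1 A hA),
    by rw [← mapAtom_mapAtom, hg.2, hf.2]⟩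

lemma isHom.iterate {f : ℕ → ℕ} {Q : CQ} (hf : isHom f Q Q) (n : ℕ) : isHom f^[n] Q Q := by
  induction n with
  | zero => exact ⟨fun A hA => by simpa using hA, mapAtom_id _⟩
  | succ n ih => exact Function.iterate_succ' f n ▸ hf.comp ih

lemma isHom.eq_self_of_mem_head {f : ℕ → ℕ} {Q₁ Q₂ : CQ} (hf : isHom f Q₂ Q₁)
    (hhead : Q₁.head = Q₂.head) : ∀ x ∈ Q₂.head.vars, f x = x :=
  eq_of_mapAtom_eq ((hf.2.trans hhead).trans (mapAtom_id _).symm)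

lemma exists_eqOn_of_compatible {ι α β : Type*} (S : ι → Set α) (f : ι → α → β) (T : Set α)
    (f₀ : α → β) (hS : ∀ i j, ∀ x ∈ S i, x ∈ S j → f i x = f j x)
    (hT : ∀ i, ∀ x ∈ S i, x ∈ T → f i x = f₀ x) :
    ∃ g : α → β, (∀ i, Set.EqOn g (f i) (S i)) ∧ Set.EqOn g f₀ T := by
  classical
  refine ⟨fun x => if hx : ∃ i, x ∈ S i then f hx.choose x else f₀ x, ?_, ?_⟩
  · intro i x hx
    have hx' : ∃ i, x ∈ S i := ⟨i, hx⟩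
    simp only [dif_pos hx']
    exact hS _ i x hx'.choose_spec hx
  · intro x hx
    by_cases hx' : ∃ i, x ∈ S i
    · simp only [dif_pos hx']
      exact hT _ x hx'.choose_spec hx
    · simp only [dif_neg hx']

lemma Finset.exists_iterate_eq_self_of_image_eq {α : Type*} [DecidableEq α] {s : Finset α}
    {f : α → α} (h : s.image f = s) : ∃ n, 0 < n ∧ ∀ x ∈ s, f^[n] x = x := by
  have hmaps : Set.MapsTo f s s := fun x hx => h ▸ mem_image_of_mem f hx
  have hsurj : Set.SurjOn f s s := by
    intro y hy
    rw [← h, mem_coe, mem_image] at hy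
    exact hy
  have hbij := (s.finite_toSet.surjOn_iff_bijOn_of_mapsTo hmaps).mp hsurj
  obtain ⟨n, hn, hper⟩ := isOfFinOrder_of_finite hbij.equiv
  refine ⟨n, hn, fun x hx => ?_⟩
  have hpow : hbij.equiv ^ n = 1 := by simpa [Function.IsPeriodicPt, Function.IsFixedPt] using hper
  have := congrArg Subtype.val (Equiv.congr_fun hpow ⟨x, hx⟩)
  rw [Equiv.Perm.coe_one, id_eq, Equiv.Perm.coe_pow] at this
  exact (hbij.mapsTo.coe_iterate_restrict ⟨x, hx⟩ n).symm.trans this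

lemma Finset.exists_partition_of_forall_exists {ι α : Type*} {s : Finset α} {P : α → ι → Prop}
    (h : ∀ a ∈ s, ∃ i, P a i) :
    ∃ t : ι → Finset α, (∀ i, t i ⊆ s) ∧ (∀ i, ∀ a ∈ t i, P a i) ∧ ∀ a ∈ s, ∃! i, a ∈ t i := by
  classical
  choose c hc using h
  have hmem : ∀ {i a}, a ∈ s.filter (fun a => ∃ ha : a ∈ s, c a ha = i) ↔
      ∃ ha : a ∈ s, c a ha = i := by
    intro i a
    simp only [mem_filter, and_iff_right_iff_imp]
    exact fun ⟨ha, _⟩ => ha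
  refine ⟨fun i => s.filter fun a => ∃ ha : a ∈ s, c a ha = i, fun i => filter_subset _ _,
    fun i a hai => ?_, fun a ha => ⟨c a ha, hmem.mpr ⟨ha, rfl⟩, fun j hj => ?_⟩⟩
  · obtain ⟨ha, rfl⟩ := hmem.mp hai
    exact hc a ha
  · obtain ⟨_, rfl⟩ := hmem.mp hj
    rfl

/-- Variables are natural numbers: above a bound `N` on the variables in use, `Nat.pair` encodes
fresh variables tagged by `k`, which `unfresh` decodes. -/
def freshVar (N k z : ℕ) : ℕ := N + Nat.pair k z

def unfresh (N : ℕ) (g : ℕ → ℕ → ℕ) (v : ℕ) : ℕ :=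
  if v < N then v else g (Nat.unpair (v - N)).1 (Nat.unpair (v - N)).2

lemma le_freshVar (N k z : ℕ) : N ≤ freshVar N k z := Nat.le_add_right N _

lemma freshVar_ne_of_lt {N v : ℕ} (hv : v < N) (k z : ℕ) : freshVar N k z ≠ v :=
  (hv.trans_le (le_freshVar N k z)).ne'

lemma freshVar_inj {N k z k' z' : ℕ} : freshVar N k z = freshVar N k' z' ↔ k = k' ∧ z = z' := by
  rw [freshVar, freshVar, Nat.add_left_cancel_iff, Nat.pair_eq_pair]

lemma unfresh_of_lt {N v : ℕ} (g : ℕ → ℕ → ℕ) (hv : v < N) : unfresh N g v = v := if_pos hv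

lemma unfresh_freshVar (N : ℕ) (g : ℕ → ℕ → ℕ) (k z : ℕ) : unfresh N g (freshVar N k z) = g k z := by
  simp [unfresh, freshVar]

lemma bvars_subset_varsOf (Q : CQ) (𝒜 : Finset Atom) : bvars Q 𝒜 ⊆ varsOf 𝒜 := inter_subset_left

lemma mem_bvars_of_mem_head {Q : CQ} {𝒜 : Finset Atom} {x : ℕ} (hx : x ∈ varsOf 𝒜)
    (hh : x ∈ Q.head.vars) : x ∈ bvars Q 𝒜 :=
  mem_inter.mpr ⟨hx, mem_union_left _ hh⟩

lemma mem_bvars_of_ne {ι : Type*} {Q : CQ} {𝒜 : ι → Finset Atom} (h𝒜 : ∀ i, 𝒜 i ⊆ Q.body)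
    (hpart : ∀ A ∈ Q.body, ∃! i, A ∈ 𝒜 i) {i j : ι} (hij : i ≠ j) {x : ℕ}
    (hi : x ∈ varsOf (𝒜 i)) (hj : x ∈ varsOf (𝒜 j)) : x ∈ bvars Q (𝒜 i) := by
  obtain ⟨A, hA, hxA⟩ := mem_varsOf.mp hj
  have hAi : A ∉ 𝒜 i := fun hAi => hij ((hpart A (h𝒜 j hA)).unique hAi hA)
  exact mem_inter.mpr ⟨hi, mem_union_right _ (mem_varsOf.mpr ⟨A, mem_sdiff.mpr ⟨h𝒜 j hA, hAi⟩, hxA⟩)⟩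

lemma isApplication.eq_or_mem_head {V : CQ} {α : ℕ → ℕ} (hα : isApplication V α) {y z : ℕ}
    (hy : y ∈ V.vars) (hz : z ∈ V.vars) (hyz : α y = α z) :
    y = z ∨ y ∈ V.head.vars ∧ z ∈ V.head.vars := by
  by_contra! h
  have hmem : ∀ {x}, x ∈ V.vars → x ∉ V.head.vars → x ∈ varsOf V.body := fun hx hxh =>
    (mem_union.mp hx).resolve_left hxh
  by_cases hyh : y ∈ V.head.vars
  · exact hα z (hmem hz (h.2 hyh)) (h.2 hyh) y hy h.1 hyz.symm
  · exact hα y (hmem hy hyh) hyh z hz (Ne.symm h.1) hyz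

lemma isApplication.exists_comp_eq {V : CQ} {α μ ν : ℕ → ℕ} (hα : isApplication V α)
    (hμ : ∀ z ∈ V.head.vars, μ z = ν (α z)) : ∃ ν' : ℕ → ℕ, ∀ z ∈ V.vars, ν' (α z) = μ z := by
  refine ⟨μ ∘ Function.invFunOn α ↑V.vars, fun z hz => ?_⟩
  have hex : ∃ y ∈ (↑V.vars : Set ℕ), α y = α z := ⟨z, hz, rfl⟩
  rcases hα.eq_or_mem_head (Function.invFunOn_mem hex) hz (Function.invFunOn_eq hex) with h | ⟨hy, hz⟩
  · exact congrArg μ h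
  · rw [Function.comp_apply, hμ _ hy, hμ _ hz, Function.invFunOn_eq hex]

lemma isCoverDesc.varsOf_subset {Q V : CQ} {𝒜 : Finset Atom} {α ψ : ℕ → ℕ}
    (hd : isCoverDesc Q 𝒜 V α ψ) : varsOf 𝒜 ⊆ V.vars.image α :=
  (varsOf_mono hd.2.2.1).trans ((varsOf_image α V.body).trans_subset
    (image_subset_image subset_union_right))

section CoverPartition

variable {σ : Schema} {Q : CQ} {𝒱 : Finset CQ} {m : ℕ} {𝒜 : Fin m → Finset Atom}
  {V : Fin m → CQ} {α ψ : Fin m → ℕ → ℕ}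

lemma isCoverPartition.overViews_inducedCQ (hcp : isCoverPartition Q 𝒱 m 𝒜 V α ψ)
    (hQ : isCQ σ Q) (hfresh : ∀ W ∈ 𝒱, Q.head.rel ≠ W.head.rel) :
    overViews 𝒱 (inducedCQ Q m V α) := by
  obtain ⟨A, hA⟩ := hQ.1
  obtain ⟨i, -, -⟩ := hcp.2 A hA
  refine ⟨⟨_, mem_image_of_mem _ (mem_univ i)⟩, ?_, hfresh, fun w hw => ?_⟩
  · rintro _ hAt
    obtain ⟨i, -, rfl⟩ := mem_image.mp hAt
    exact ⟨V i, (hcp.1 i).1, rfl, List.length_map _⟩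
  · obtain ⟨A, hA, hwA⟩ := mem_varsOf.mp (hQ.2.2.2 hw)
    obtain ⟨i, hi, -⟩ := hcp.2 A hA
    have hwα := (hcp.1 i).2.2.2.2.1 (mem_bvars_of_mem_head (mem_varsOf.mpr ⟨A, hi, hwA⟩) hw)
    rw [← Atom.vars_mapAtom] at hwα
    exact vars_subset_varsOf (mem_image_of_mem _ (mem_univ i)) hwα

lemma isCoverPartition.evalCQ_inducedCQ_subset (hcp : isCoverPartition Q 𝒱 m 𝒜 V α ψ)
    (h𝒱 : isViewSet σ 𝒱) (D : Database) :
    evalCQ (inducedCQ Q m V α) (viewDB 𝒱 D) ⊆ evalCQ Q D := by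
  rintro _ ⟨νt, hνt, rfl⟩
  have hview : ∀ i, ∃ μ : ℕ → ℕ, (∀ B ∈ (V i).body, mapAtom μ B ∈ D) ∧
      ∀ z ∈ (V i).head.vars, μ z = νt (α i z) := by
    intro i
    have hmem := hνt _ (mem_image_of_mem _ (mem_univ i))
    rw [mapAtom_mapAtom] at hmem
    obtain ⟨μ, hμD, hμh⟩ := mem_evalCQ_of_mapAtom_head_mem_viewDB h𝒱 (hcp.1 i).1 hmem
    exact ⟨μ, hμD, eq_of_mapAtom_eq hμh⟩
  choose μ hμD hμh using hview
  choose ν hν using fun i => (hcp.1 i).2.2.1.exists_comp_eq (hμh i)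
  have hbv : ∀ i, ∀ v ∈ bvars Q (𝒜 i), ν i v = νt v := by
    intro i v hv
    obtain ⟨z, hz, rfl⟩ := mem_image.mp ((hcp.1 i).2.2.2.2.1 hv)
    rw [hν i z (mem_union_left _ hz), hμh i z hz]
  have h𝒜Q : ∀ i, 𝒜 i ⊆ Q.body := fun i => (hcp.1 i).2.1
  obtain ⟨g, hg, hgh⟩ := exists_eqOn_of_compatible (fun i => ↑(varsOf (𝒜 i))) ν ↑Q.head.vars νt
    (fun i j x hi hj => by
      rcases eq_or_ne i j with rfl | hij
      · rfl
      · rw [hbv i x (mem_bvars_of_ne h𝒜Q hcp.2 hij hi hj),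
          hbv j x (mem_bvars_of_ne h𝒜Q hcp.2 hij.symm hj hi)])
    (fun i x hi hh => hbv i x (mem_bvars_of_mem_head hi hh))
  refine ⟨g, fun A hA => ?_, mapAtom_congr fun x hx => hgh hx⟩
  obtain ⟨i, hi, -⟩ := hcp.2 A hA
  obtain ⟨B, hB, rfl⟩ := mem_image.mp ((hcp.1 i).2.2.2.1 hi)
  rw [mapAtom_congr (g := ν i) fun x hx => hg i (vars_subset_varsOf hi hx), mapAtom_mapAtom,
    mapAtom_congr (f := ν i ∘ α i) (g := μ i) fun z hz =>
      hν i z (mem_union_right _ (vars_subset_varsOf hB hz))]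
  exact hμD i B hB

lemma isCoverPartition.mem_varsOf_of_isConsistent (hcp : isCoverPartition Q 𝒱 m 𝒜 V α ψ)
    (hcons : isConsistent Q m 𝒜 V α) {i : Fin m} {z : ℕ}
    (hz : z ∈ (applyCQ (α i) (V i)).vars) (hzQ : z ∈ varsOf Q.body) : z ∈ varsOf (𝒜 i) := by
  obtain ⟨A, hA, hzA⟩ := mem_varsOf.mp hzQ
  obtain ⟨j, hj, -⟩ := hcp.2 A hA
  rcases eq_or_ne j i with rfl | hji
  · exact vars_subset_varsOf hj hzA
  · obtain ⟨x, hx, hxz⟩ := mem_image.mp ((hcp.1 j).2.varsOf_subset (vars_subset_varsOf hj hzA))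
    exact bvars_subset_varsOf Q _ (hcons j i hji z hz ⟨x, hx, hxz⟩)

lemma isCoverPartition.evalCQ_subset_evalCQ_inducedCQ (hcp : isCoverPartition Q 𝒱 m 𝒜 V α ψ)
    (hcons : isConsistent Q m 𝒜 V α) (hsafe : Q.head.vars ⊆ varsOf Q.body) (D : Database) :
    evalCQ Q D ⊆ evalCQ (inducedCQ Q m V α) (viewDB 𝒱 D) := by
  rintro _ ⟨ν, hν, rfl⟩
  have hψid : ∀ i, ∀ x ∈ varsOf (𝒜 i), ψ i x = x := fun i => (hcp.1 i).2.2.2.2.2.2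
  obtain ⟨g, hg, hgQ⟩ := exists_eqOn_of_compatible (fun i => ↑(applyCQ (α i) (V i)).vars)
    (fun i => ν ∘ ψ i) ↑(varsOf Q.body) ν
    (fun i j x hi hj => by
      rcases eq_or_ne i j with rfl | hij
      · rfl
      · have hjx := mem_image.mp ((CQ.vars_applyCQ _ _).subset hj)
        have hix := mem_image.mp ((CQ.vars_applyCQ _ _).subset hi)
        simp only [Function.comp_apply,
          hψid i x (bvars_subset_varsOf Q _ (hcons j i hij.symm x hi hjx)),
          hψid j x (bvars_subset_varsOf Q _ (hcons i j hij x hj hix))])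
    (fun i x hi hx => congrArg ν (hψid i x (hcp.mem_varsOf_of_isConsistent hcons hi hx)))
  refine ⟨g, ?_, mapAtom_congr fun x hx => hgQ (hsafe hx)⟩
  rintro _ hAt
  obtain ⟨i, -, rfl⟩ := mem_image.mp hAt
  refine mem_viewDB.mpr ⟨V i, (hcp.1 i).1, g ∘ α i, fun B hB => ?_, (mapAtom_mapAtom _ _ _).symm⟩
  have hαB : mapAtom (α i) B ∈ (applyCQ (α i) (V i)).body := mem_image_of_mem _ hB
  rw [← mapAtom_mapAtom, mapAtom_congr fun x hx => hg i (mem_union_right _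
    (vars_subset_varsOf hαB hx)), ← mapAtom_mapAtom]
  exact hν _ ((hcp.1 i).2.2.2.2.2.1 _ hαB)

lemma isCoverPartition.isRewriting_inducedCQ (hcp : isCoverPartition Q 𝒱 m 𝒜 V α ψ)
    (hcons : isConsistent Q m 𝒜 V α) (hQ : isCQ σ Q) (h𝒱 : isViewSet σ 𝒱)
    (hfresh : ∀ W ∈ 𝒱, Q.head.rel ≠ W.head.rel) : isRewriting σ 𝒱 Q (inducedCQ Q m V α) :=
  ⟨hcp.overViews_inducedCQ hQ hfresh, fun D _ _ =>
    (hcp.evalCQ_inducedCQ_subset h𝒱 D).antisymm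
      (hcp.evalCQ_subset_evalCQ_inducedCQ hcons hQ.2.2.2 D)⟩

end CoverPartition

def freshenOutside (S : Finset ℕ) (N k z : ℕ) : ℕ := if z ∈ S then z else freshVar N k z

section FreshenOutside

variable {S : Finset ℕ} {N : ℕ}

lemma freshenOutside_of_mem (k : ℕ) {z : ℕ} (hz : z ∈ S) : freshenOutside S N k z = z := if_pos hz

lemma unfresh_freshenOutside (hS : ∀ v ∈ S, v < N) (k z : ℕ) :
    unfresh N (fun _ z => z) (freshenOutside S N k z) = z := by
  by_cases hz : z ∈ S
  · rw [freshenOutside_of_mem k hz, unfresh_of_lt _ (hS z hz)]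
  · rw [freshenOutside, if_neg hz, unfresh_freshVar]

lemma freshenOutside_injective (hS : ∀ v ∈ S, v < N) (k : ℕ) :
    Function.Injective (freshenOutside S N k) :=
  Function.LeftInverse.injective (unfresh_freshenOutside hS k)

lemma mem_of_freshenOutside_eq {S' : Finset ℕ} (hS : ∀ v ∈ S, v < N) (hS' : ∀ v ∈ S', v < N)
    {k k' a b : ℕ} (hk : k ≠ k') (h : freshenOutside S N k a = freshenOutside S' N k' b) :
    a ∈ S ∧ b ∈ S' := by
  unfold freshenOutside at h
  split_ifs at h with ha hb hb
  · exact ⟨ha, hb⟩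
  · exact absurd h.symm (freshVar_ne_of_lt (hS a ha) _ _)
  · exact absurd h (freshVar_ne_of_lt (hS' b hb) _ _)
  · exact absurd (freshVar_inj.mp h).1 hk

end FreshenOutside

lemma isCoverDesc.comp_freshenOutside {Q V : CQ} {𝒜 : Finset Atom} {α ψ : ℕ → ℕ}
    (hd : isCoverDesc Q 𝒜 V α ψ) {N : ℕ} (hN : ∀ v ∈ varsOf 𝒜, v < N) (k : ℕ) :
    isCoverDesc Q 𝒜 V (freshenOutside (varsOf 𝒜) N k ∘ α) (ψ ∘ unfresh N fun _ z => z) := by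
  obtain ⟨h𝒜Q, hα, h𝒜α, hbv, hψ, hψid⟩ := hd
  have hsr := unfresh_freshenOutside hN k
  refine ⟨h𝒜Q, fun x hx hxh y hy hyx hxy => hα x hx hxh y hy hyx
    (freshenOutside_injective hN k hxy), fun A hA => ?_, fun w hw => ?_, ?_, fun x hx => ?_⟩
  · obtain ⟨B, hB, rfl⟩ := mem_image.mp (h𝒜α hA)
    refine mem_image.mpr ⟨B, hB, ?_⟩
    rw [← mapAtom_mapAtom]
    exact mapAtom_eq_self fun x hx => freshenOutside_of_mem k (vars_subset_varsOf hA hx)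
  · obtain ⟨y, hy, rfl⟩ := mem_image.mp (hbv hw)
    exact mem_image.mpr ⟨y, hy, freshenOutside_of_mem k (bvars_subset_varsOf Q 𝒜 hw)⟩
  · rintro _ hAt
    obtain ⟨C, hC, rfl⟩ := mem_image.mp hAt
    convert hψ _ (mem_image_of_mem _ hC) using 1
    rw [mapAtom_mapAtom, mapAtom_mapAtom]
    exact mapAtom_congr fun z _ => congrArg ψ (hsr (α z))
  · rw [Function.comp_apply, unfresh_of_lt _ (hN x hx), hψid x hx]

lemma isCoverPartition.exists_isConsistent {Q : CQ} {𝒱 : Finset CQ} {m : ℕ}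
    {𝒜 : Fin m → Finset Atom} {V : Fin m → CQ} {α ψ : Fin m → ℕ → ℕ}
    (hcp : isCoverPartition Q 𝒱 m 𝒜 V α ψ) :
    ∃ α' ψ' : Fin m → ℕ → ℕ, isCoverPartition Q 𝒱 m 𝒜 V α' ψ' ∧ isConsistent Q m 𝒜 V α' := by
  obtain ⟨N, hN⟩ := (varsOf Q.body).exists_nat_subset_range
  have hN𝒜 : ∀ i, ∀ v ∈ varsOf (𝒜 i), v < N := fun i v hv =>
    mem_range.mp (hN (varsOf_mono (hcp.1 i).2.1 hv))
  refine ⟨fun i => freshenOutside (varsOf (𝒜 i)) N i ∘ α i, fun i => ψ i ∘ unfresh N fun _ z => z,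
    ⟨fun i => ⟨(hcp.1 i).1, (hcp.1 i).2.comp_freshenOutside (hN𝒜 i) i⟩, hcp.2⟩, ?_⟩
  rintro i j hij z hz ⟨x, -, rfl⟩
  rw [CQ.vars_applyCQ] at hz
  obtain ⟨w, -, hw⟩ := mem_image.mp hz
  obtain ⟨hx, hw'⟩ := mem_of_freshenOutside_eq (hN𝒜 i) (hN𝒜 j) (Fin.val_injective.ne hij) hw.symm
  simp only [Function.comp_apply, freshenOutside_of_mem _ hx] at hw ⊢
  rw [freshenOutside_of_mem _ hw'] at hw
  exact mem_bvars_of_ne (fun i => (hcp.1 i).2.1) hcp.2 hij.symm (hw ▸ hw') hx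

lemma evalCQ_subset_of_isHom {h : ℕ → ℕ} {Q₁ Q₂ : CQ} (hh : isHom h Q₂ Q₁) (D : Database) :
    evalCQ Q₁ D ⊆ evalCQ Q₂ D := by
  rintro _ ⟨ν, hν, rfl⟩
  exact ⟨ν ∘ h, fun A hA => mapAtom_mapAtom ν h A ▸ hν _ (hh.1 A hA), by
    rw [← mapAtom_mapAtom, hh.2]⟩

lemma isBodyHom.apply_mem_varsOf {f : ℕ → ℕ} {P Q : CQ} (hf : isBodyHom f P Q) {z : ℕ}
    (hz : z ∈ varsOf P.body) : f z ∈ varsOf Q.body := by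
  obtain ⟨B, hB, hzB⟩ := mem_varsOf.mp hz
  refine vars_subset_varsOf (hf B hB) ?_
  rw [Atom.vars_mapAtom]
  exact mem_image_of_mem f hzB

lemma isMinimal.image_body_eq {Q : CQ} (hmin : isMinimal Q) {θ : ℕ → ℕ} (hθ : isHom θ Q Q) :
    Q.body.image (mapAtom θ) = Q.body := by
  have hsub : Q.body.image (mapAtom θ) ⊆ Q.body := image_subset_iff.mpr hθ.1
  have hto : isHom θ Q ⟨Q.head, Q.body.image (mapAtom θ)⟩ :=
    ⟨fun A hA => mem_image_of_mem _ hA, hθ.2⟩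
  have hfrom : isHom id ⟨Q.head, Q.body.image (mapAtom θ)⟩ Q :=
    ⟨fun A hA => by simpa using hsub hA, mapAtom_id _⟩
  exact eq_of_subset_of_card_le hsub (hmin _ fun D _ =>
    (evalCQ_subset_of_isHom hfrom D).antisymm (evalCQ_subset_of_isHom hto D))

lemma isMinimal.exists_section {Q E : CQ} (hmin : isMinimal Q) {g h : ℕ → ℕ} (hg : isHom g Q E)
    (hh : isHom h E Q) : ∃ φ : ℕ → ℕ, isHom φ Q E ∧ ∀ v ∈ varsOf Q.body, h (φ v) = v := by
  have hθ : isHom (h ∘ g) Q Q := hh.comp hg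
  have himg : (varsOf Q.body).image (h ∘ g) = varsOf Q.body := by
    rw [← varsOf_image, hmin.image_body_eq hθ]
  obtain ⟨n, hn, hfix⟩ := exists_iterate_eq_self_of_image_eq himg
  refine ⟨g ∘ (h ∘ g)^[n - 1], hg.comp (hθ.iterate _), fun v hv => ?_⟩
  calc h (g ((h ∘ g)^[n - 1] v)) = (h ∘ g)^[n - 1 + 1] v := (Function.iterate_succ_apply' (h ∘ g) _ v).symm
    _ = v := by rw [Nat.sub_add_cancel hn, hfix v hv]

lemma exists_views_of_isRewriting {σ : Schema} {Q Q' : CQ} {𝒱 : Finset CQ}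
    (hQ : ∀ A ∈ Q.body, atomOver σ A) (hrw : isRewriting σ 𝒱 Q Q') :
    ∃ (m : ℕ) (V : Fin m → CQ) (μ : Fin m → ℕ → ℕ), (∀ i, V i ∈ 𝒱 ∧ isBodyHom (μ i) (V i) Q) ∧
      Q.head ∈ evalCQ Q' (Set.range fun i => mapAtom (μ i) (V i).head) := by
  have hcan := head_mem_evalCQ_body Q
  rw [← hrw.2 _ Q.body.finite_toSet hQ] at hcan
  obtain ⟨ν, hν, hhead⟩ := hcan
  have hview : ∀ B : Q'.body, ∃ V ∈ 𝒱, ∃ μ : ℕ → ℕ, isBodyHom μ V Q ∧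
      mapAtom μ V.head = mapAtom ν B := fun B => by
    obtain ⟨V, hV, μ, hμ, hμh⟩ := mem_viewDB.mp (hν B B.2)
    exact ⟨V, hV, μ, hμ, hμh⟩
  choose V hV μ hμ hμh using hview
  let e := Q'.body.equivFin.symm
  refine ⟨_, V ∘ e, μ ∘ e, fun i => ⟨hV _, hμ _⟩, ν, fun B hB => ⟨e.symm ⟨B, hB⟩, ?_⟩, hhead⟩
  simp [hμh]

section Expansion

variable {m : ℕ} (V : Fin m → CQ) (μ : Fin m → ℕ → ℕ) (N : ℕ)

/-- The `i`-th atom of the rewriting is the view fact `μ i (V i).head`; in the expansion the head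
variables of `V i` follow `μ i` and its quantified variables get fresh names tagged by `i`. -/
def expansionSubst (i : Fin m) (z : ℕ) : ℕ :=
  if z ∈ (V i).head.vars then μ i z else freshVar N i z

def expansion (H : Atom) : CQ :=
  ⟨H, univ.biUnion fun i => (V i).body.image (mapAtom (expansionSubst V μ N i))⟩

def expansionRetract : ℕ → ℕ := unfresh N fun k z => if hk : k < m then μ ⟨k, hk⟩ z else z

variable {V μ N}

lemma mem_expansion_body {H : Atom} {i : Fin m} {B : Atom} (hB : B ∈ (V i).body) :
    mapAtom (expansionSubst V μ N i) B ∈ (expansion V μ N H).body :=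
  mem_biUnion.mpr ⟨i, mem_univ i, mem_image_of_mem _ hB⟩

lemma expansionRetract_of_lt {v : ℕ} (hv : v < N) : expansionRetract μ N v = v :=
  unfresh_of_lt _ hv

lemma expansionRetract_expansionSubst {i : Fin m} {z : ℕ} (hz : μ i z < N) :
    expansionRetract μ N (expansionSubst V μ N i z) = μ i z := by
  unfold expansionSubst
  split_ifs
  · exact expansionRetract_of_lt hz
  · simp [expansionRetract, unfresh_freshVar]

lemma expansionSubst_eq_freshVar {i j : Fin m} {y z : ℕ} (hy : μ j y < N)
    (h : expansionSubst V μ N j y = freshVar N i z) : j = i ∧ y = z := by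
  unfold expansionSubst at h
  split_ifs at h
  · exact absurd h.symm (freshVar_ne_of_lt hy _ _)
  · exact (freshVar_inj.mp h).imp Fin.ext id

lemma isHom_expansionRetract {Q : CQ} (hμ : ∀ i, isBodyHom (μ i) (V i) Q)
    (hN : varsOf Q.body ⊆ range N) (hsafe : Q.head.vars ⊆ varsOf Q.body) :
    isHom (expansionRetract μ N) (expansion V μ N Q.head) Q := by
  refine ⟨fun A hA => ?_, mapAtom_eq_self fun v hv => expansionRetract_of_lt
    (mem_range.mp (hN (hsafe hv)))⟩
  obtain ⟨i, -, hA⟩ := mem_biUnion.mp hA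
  obtain ⟨B, hB, rfl⟩ := mem_image.mp hA
  rw [mapAtom_mapAtom, mapAtom_congr (f := expansionRetract μ N ∘ expansionSubst V μ N i) (g := μ i)
    fun z hz => expansionRetract_expansionSubst
    (mem_range.mp (hN ((hμ i).apply_mem_varsOf (vars_subset_varsOf hB hz))))]
  exact hμ i B hB

lemma exists_isHom_expansion {σ : Schema} {𝒱 : Finset CQ} {Q Q' : CQ}
    (hσ : ∀ i, ∀ B ∈ (V i).body, atomOver σ B) (hV : ∀ i, V i ∈ 𝒱)
    (hrw : isRewriting σ 𝒱 Q Q')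
    (hfacts : Q.head ∈ evalCQ Q' (Set.range fun i => mapAtom (μ i) (V i).head)) :
    ∃ g : ℕ → ℕ, isHom g Q (expansion V μ N Q.head) := by
  have hover : isDBOver σ ↑(expansion V μ N Q.head).body := by
    intro F hF
    obtain ⟨i, -, hF⟩ := mem_biUnion.mp hF
    obtain ⟨B, hB, rfl⟩ := mem_image.mp hF
    exact atomOver_mapAtom (hσ i B hB) _
  have hsub : (Set.range fun i => mapAtom (μ i) (V i).head) ⊆
      viewDB 𝒱 ↑(expansion V μ N Q.head).body := by
    rintro _ ⟨i, rfl⟩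
    have hhead : mapAtom (μ i) (V i).head = mapAtom (expansionSubst V μ N i) (V i).head :=
      mapAtom_congr fun z hz => (if_pos hz).symm
    show mapAtom (μ i) (V i).head ∈ _
    rw [hhead]
    exact mem_viewDB.mpr ⟨V i, hV i, mapAtom_head_mem_evalCQ fun B hB => mem_expansion_body hB⟩
  have hmem := evalCQ_mono Q' hsub hfacts
  rw [hrw.2 _ (finite_toSet _) hover] at hmem
  obtain ⟨g, hg, hgh⟩ := hmem
  exact ⟨g, hg, hgh⟩

end Expansion

section CoverOfSection

variable {m : ℕ} (V : Fin m → CQ) (μ : Fin m → ℕ → ℕ) (N : ℕ) (φ : ℕ → ℕ) (Q : CQ)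

/-- Where the section `φ` reaches the expansion, `V i` is mapped back into `Q`; every other variable
is made fresh, so that `coverSubst` is an application. -/
def coverSubst (i : Fin m) (z : ℕ) : ℕ :=
  if expansionSubst V μ N i z ∈ (varsOf Q.body).image φ then
    expansionRetract μ N (expansionSubst V μ N i z)
  else freshVar N 0 z

def coverHom (i : Fin m) : ℕ → ℕ := unfresh N fun _ z => μ i z

variable {V μ N φ Q}

lemma coverSubst_of_eq (hφh : ∀ v ∈ varsOf Q.body, expansionRetract μ N (φ v) = v) {i : Fin m}
    {z w : ℕ} (h : expansionSubst V μ N i z = φ w) (hw : w ∈ varsOf Q.body) :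
    coverSubst V μ N φ Q i z = w := by
  rw [coverSubst, if_pos (mem_image.mpr ⟨w, hw, h.symm⟩), h, hφh w hw]

lemma coverHom_coverSubst {i : Fin m} (hμN : ∀ z ∈ (V i).vars, μ i z < N) {z : ℕ}
    (hz : z ∈ (V i).vars) : coverHom μ N i (coverSubst V μ N φ Q i z) = μ i z := by
  unfold coverSubst
  split_ifs
  · rw [expansionRetract_expansionSubst (hμN z hz), coverHom, unfresh_of_lt _ (hμN z hz)]
  · exact unfresh_freshVar _ _ _ _

lemma isApplication_coverSubst {i : Fin m} (hμN : ∀ z ∈ (V i).vars, μ i z < N)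
    (hN : varsOf Q.body ⊆ range N) (hφh : ∀ v ∈ varsOf Q.body, expansionRetract μ N (φ v) = v) :
    isApplication (V i) (coverSubst V μ N φ Q i) := by
  intro x hx hxh y hy hyx hxy
  unfold coverSubst at hxy
  split_ifs at hxy with hPx hPy hPy
  · obtain ⟨w, hw, hwx⟩ := mem_image.mp hPx
    obtain ⟨w', hw', hwy⟩ := mem_image.mp hPy
    rw [← hwx, ← hwy, hφh w hw, hφh w' hw'] at hxy
    subst hxy
    have hβy : expansionSubst V μ N i y = freshVar N i x := by
      rw [← hwy, hwx, expansionSubst, if_neg hxh]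
    exact hyx (expansionSubst_eq_freshVar (hμN y hy) hβy).2
  · obtain ⟨w, hw, hwx⟩ := mem_image.mp hPx
    rw [← hwx, hφh w hw] at hxy
    exact freshVar_ne_of_lt (mem_range.mp (hN hw)) _ _ hxy.symm
  · obtain ⟨w, hw, hwy⟩ := mem_image.mp hPy
    rw [← hwy, hφh w hw] at hxy
    exact freshVar_ne_of_lt (mem_range.mp (hN hw)) _ _ hxy
  · exact hyx (freshVar_inj.mp hxy).2.symm

lemma isCoverDesc_coverSubst {i : Fin m} (hμ : isBodyHom (μ i) (V i) Q)
    (hμN : ∀ z ∈ (V i).vars, μ i z < N) (hN : varsOf Q.body ⊆ range N)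
    (hφh : ∀ v ∈ varsOf Q.body, expansionRetract μ N (φ v) = v) {𝒜 : Finset Atom}
    (h𝒜Q : 𝒜 ⊆ Q.body)
    (h𝒜φ : ∀ A ∈ 𝒜, mapAtom φ A ∈ (V i).body.image (mapAtom (expansionSubst V μ N i)))
    (hbr : ∀ w ∈ bvars Q 𝒜, ∀ z, φ w ≠ freshVar N i z) :
    isCoverDesc Q 𝒜 (V i) (coverSubst V μ N φ Q i) (coverHom μ N i) := by
  refine ⟨h𝒜Q, isApplication_coverSubst hμN hN hφh, fun A hA => ?_, fun w hw => ?_, ?_,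
    fun x hx => unfresh_of_lt _ (mem_range.mp (hN (varsOf_mono h𝒜Q hx)))⟩
  · obtain ⟨B, hB, hBA⟩ := mem_image.mp (h𝒜φ A hA)
    refine mem_image.mpr ⟨B, hB, ?_⟩
    have hcs : mapAtom (coverSubst V μ N φ Q i) B =
        mapAtom (expansionRetract μ N ∘ expansionSubst V μ N i) B := mapAtom_congr fun z hz => by
      obtain ⟨w, hw, hzw⟩ := exists_mem_vars_of_mapAtom_eq hBA hz
      rw [Function.comp_apply, hzw, coverSubst_of_eq hφh hzw (vars_subset_varsOf (h𝒜Q hA) hw),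
        hφh w (vars_subset_varsOf (h𝒜Q hA) hw)]
    rw [hcs, ← mapAtom_mapAtom, hBA, mapAtom_mapAtom]
    exact mapAtom_eq_self fun v hv => hφh v (vars_subset_varsOf (h𝒜Q hA) hv)
  · obtain ⟨A, hA, hwA⟩ := mem_varsOf.mp (bvars_subset_varsOf Q 𝒜 hw)
    obtain ⟨B, -, hBA⟩ := mem_image.mp (h𝒜φ A hA)
    obtain ⟨z, hz, hwz⟩ := exists_mem_vars_of_mapAtom_eq hBA.symm hwA
    have hzh : z ∈ (V i).head.vars := by
      by_contra hzh
      exact hbr w hw z (hwz.trans (if_neg hzh))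
    exact mem_image.mpr ⟨z, hzh, coverSubst_of_eq hφh hwz.symm (vars_subset_varsOf (h𝒜Q hA) hwA)⟩
  · rintro _ hAt
    obtain ⟨C, hC, rfl⟩ := mem_image.mp hAt
    rw [mapAtom_mapAtom, mapAtom_congr (f := coverHom μ N i ∘ coverSubst V μ N φ Q i) (g := μ i)
      fun z hz => coverHom_coverSubst hμN (mem_union_right _ (vars_subset_varsOf hC hz))]
    exact hμ C hC

lemma freshVar_ne_of_mem_bvars (hμN : ∀ i, ∀ z ∈ (V i).vars, μ i z < N)
    (hN : varsOf Q.body ⊆ range N) (hφ : isHom φ Q (expansion V μ N Q.head))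
    {𝒜 : Fin m → Finset Atom} (h𝒜Q : ∀ i, 𝒜 i ⊆ Q.body)
    (h𝒜φ : ∀ i, ∀ A ∈ 𝒜 i, mapAtom φ A ∈ (V i).body.image (mapAtom (expansionSubst V μ N i)))
    (hpart : ∀ A ∈ Q.body, ∃! i, A ∈ 𝒜 i) {i : Fin m} {w : ℕ} (hw : w ∈ bvars Q (𝒜 i)) (z : ℕ) :
    φ w ≠ freshVar N i z := by
  intro hwz
  obtain ⟨hw𝒜, hw'⟩ := mem_inter.mp hw
  rcases mem_union.mp hw' with hwh | hwr
  · rw [hφ.eq_self_of_mem_head rfl w hwh] at hwz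
    exact freshVar_ne_of_lt (mem_range.mp (hN (varsOf_mono (h𝒜Q i) hw𝒜))) _ _ hwz.symm
  · obtain ⟨A, hA, hwA⟩ := mem_varsOf.mp hwr
    obtain ⟨hAQ, hAi⟩ := mem_sdiff.mp hA
    obtain ⟨j, hj, -⟩ := hpart A hAQ
    obtain ⟨B, hB, hBA⟩ := mem_image.mp (h𝒜φ j A hj)
    obtain ⟨y, hy, hwy⟩ := exists_mem_vars_of_mapAtom_eq hBA.symm hwA
    obtain ⟨rfl, -⟩ := expansionSubst_eq_freshVar
      (hμN j y (mem_union_right _ (vars_subset_varsOf hB hy))) (hwy.symm.trans hwz)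
    exact hAi hj

lemma exists_coverPartition_of_section {𝒱 : Finset CQ} (hV : ∀ i, V i ∈ 𝒱)
    (hμ : ∀ i, isBodyHom (μ i) (V i) Q) (hμN : ∀ i, ∀ z ∈ (V i).vars, μ i z < N)
    (hN : varsOf Q.body ⊆ range N) (hφ : isHom φ Q (expansion V μ N Q.head))
    (hφh : ∀ v ∈ varsOf Q.body, expansionRetract μ N (φ v) = v) :
    ∃ (𝒜 : Fin m → Finset Atom) (α ψ : Fin m → ℕ → ℕ), isCoverPartition Q 𝒱 m 𝒜 V α ψ := by
  obtain ⟨𝒜, h𝒜Q, h𝒜φ, hpart⟩ := exists_partition_of_forall_exists (s := Q.body)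
    (P := fun A i => mapAtom φ A ∈ (V i).body.image (mapAtom (expansionSubst V μ N i)))
    fun A hA => by
      obtain ⟨i, -, h⟩ := mem_biUnion.mp (hφ.1 A hA)
      exact ⟨i, h⟩
  exact ⟨𝒜, coverSubst V μ N φ Q, coverHom μ N, fun i => ⟨hV i, isCoverDesc_coverSubst (hμ i)
    (hμN i) hN hφh (h𝒜Q i) (h𝒜φ i) fun w hw => freshVar_ne_of_mem_bvars hμN hN hφ h𝒜Q h𝒜φ hpart hw⟩,
    hpart⟩

end CoverOfSection

theorem exists_coverPartition_of_isRewriting {σ : Schema} {Q Q' : CQ} {𝒱 : Finset CQ}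
    (hQ : isCQ σ Q) (hmin : isMinimal Q) (h𝒱 : isViewSet σ 𝒱) (hrw : isRewriting σ 𝒱 Q Q') :
    ∃ (m : ℕ) (𝒜 : Fin m → Finset Atom) (V : Fin m → CQ) (α ψ : Fin m → ℕ → ℕ),
      isCoverPartition Q 𝒱 m 𝒜 V α ψ := by
  obtain ⟨m, V, μ, hVμ, hfacts⟩ := exists_views_of_isRewriting hQ.2.1 hrw
  obtain ⟨N, hN⟩ := (varsOf Q.body).exists_nat_subset_range
  have hμN : ∀ i, ∀ z ∈ (V i).vars, μ i z < N := fun i z hz => by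
    have hsafe := (h𝒱.1 _ (hVμ i).1).2.2.2
    exact mem_range.mp (hN ((hVμ i).2.apply_mem_varsOf
      ((mem_union.mp hz).elim (fun h => hsafe h) id)))
  obtain ⟨g, hg⟩ := exists_isHom_expansion (N := N)
    (fun i => (h𝒱.1 _ (hVμ i).1).2.1) (fun i => (hVμ i).1) hrw hfacts
  obtain ⟨φ, hφ, hφh⟩ := hmin.exists_section hg
    (isHom_expansionRetract (fun i => (hVμ i).2) hN hQ.2.2.2)
  obtain ⟨𝒜, α, ψ, hcp⟩ := exists_coverPartition_of_section (fun i => (hVμ i).1)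
    (fun i => (hVμ i).2) hμN hN hφ hφh
  exact ⟨m, 𝒜, V, α, ψ, hcp⟩

/-- For a minimal CQ `Q` and a finite set `𝒱` of views, the following are
equivalent: (a) `Q` is 𝒱-rewritable, (b) there is a cover partition for `Q` over `𝒱`,
(c) there is a consistent cover partition for `Q` over `𝒱`. Moreover, if `𝒞` is a
consistent cover partition, then the induced query `Q_𝒞` is a 𝒱-rewriting of `Q`. -/
theorem statement1 (σ : Schema) (Q : CQ) (𝒱 : Finset CQ)
    (hQ : isCQ σ Q) (hmin : isMinimal Q) (h𝒱 : isViewSet σ 𝒱)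
    (hfresh : ∀ V ∈ 𝒱, Q.head.rel ≠ V.head.rel) :
    ((∃ Q', isRewriting σ 𝒱 Q Q') ↔
      (∃ (m : ℕ) (𝒜 : Fin m → Finset Atom) (V : Fin m → CQ) (α ψ : Fin m → ℕ → ℕ),
        isCoverPartition Q 𝒱 m 𝒜 V α ψ)) ∧
    ((∃ (m : ℕ) (𝒜 : Fin m → Finset Atom) (V : Fin m → CQ) (α ψ : Fin m → ℕ → ℕ),
        isCoverPartition Q 𝒱 m 𝒜 V α ψ) ↔
      (∃ (m : ℕ) (𝒜 : Fin m → Finset Atom) (V : Fin m → CQ) (α ψ : Fin m → ℕ → ℕ),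
        isCoverPartition Q 𝒱 m 𝒜 V α ψ ∧ isConsistent Q m 𝒜 V α)) ∧
    (∀ (m : ℕ) (𝒜 : Fin m → Finset Atom) (V : Fin m → CQ) (α ψ : Fin m → ℕ → ℕ),
      isCoverPartition Q 𝒱 m 𝒜 V α ψ → isConsistent Q m 𝒜 V α →
        isRewriting σ 𝒱 Q (inducedCQ Q m V α)) := by
  refine ⟨⟨fun ⟨_, hrw⟩ => exists_coverPartition_of_isRewriting hQ hmin h𝒱 hrw, ?_⟩,
    ⟨fun ⟨m, 𝒜, V, _, _, hcp⟩ => ?_, fun ⟨m, 𝒜, V, α, ψ, hcp, _⟩ => ⟨m, 𝒜, V, α, ψ, hcp⟩⟩,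
    fun _ _ _ _ _ hcp hcons => hcp.isRewriting_inducedCQ hcons hQ h𝒱 hfresh⟩
  · rintro ⟨m, 𝒜, V, _, _, hcp⟩
    obtain ⟨α, ψ, hcp', hcons⟩ := hcp.exists_isConsistent
    exact ⟨_, hcp'.isRewriting_inducedCQ hcons hQ h𝒱 hfresh⟩
  · obtain ⟨α, ψ, hcp', hcons⟩ := hcp.exists_isConsistent
    exact ⟨m, 𝒜, V, α, ψ, hcp', hcons⟩
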